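/- For all n ≥ 1, the subword complexity of the Thue–Morse word satisfies p_t(n+1) − p_t(n) ≤ 4. -/

import Mathlib

/-- The Thue–Morse word: `t n = s₂(n) mod 2`, where `s₂(n)` is the sum of the
binary digits of `n`. -/
def thueMorse (n : ℕ) : ℕ := (Nat.digits 2 n).sum % 2

/-- The subword complexity of the infinite word `w`: the number of distinct
contiguous subwords (factors) of `w` of length `n`, a factor of length `n`
being identified with the function `Fin n → ℕ` giving its letters. -/
noncomputable def complexity (w : ℕ → ℕ) (n : ℕ) : ℕ :=
  Set.ncard {f : Fin n → ℕ | ∃ i : ℕ, ∀ j : Fin n, f j = w (i + j)}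

/-!
For a binary word, `p(n+1) - p(n)` is at most the number of right special factors of length `n`,
those that occur followed by two different letters. In the Thue–Morse word all occurrences of a
factor of length at least `4` have the same parity, and a factor can only be right special if the
letter after it sits at an even position. Hence a right special factor of length `n ≥ 4` is the
suffix of length `n` of `μ(u)`, where `μ` is the morphism `0 ↦ 01, 1 ↦ 10` and `u` is a right
special factor of length `⌈n/2⌉`. By induction there are never more right special factors of
length `n` than of some length `≤ 3`, and there are at most `4` of those: as `000` and `111` are
not factors, a right special factor of length `3` ends in two distinct letters.
-/

namespace InfiniteWord

variable (w : ℕ → ℕ)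

def OccursAt {n : ℕ} (f : Fin n → ℕ) (i : ℕ) : Prop := ∀ j : Fin n, f j = w (i + j)

def factors (n : ℕ) : Set (Fin n → ℕ) := {f | ∃ i, OccursAt w f i}

def rightSpecialFactors (n : ℕ) : Set (Fin n → ℕ) :=
  {f | ∃ i i', OccursAt w f i ∧ OccursAt w f i' ∧ w (i + n) ≠ w (i' + n)}

variable {w}

theorem complexity_eq_ncard_factors (n : ℕ) : complexity w n = (factors w n).ncard := rfl

theorem OccursAt.eq {n i : ℕ} {f g : Fin n → ℕ} (hf : OccursAt w f i) (hg : OccursAt w g i) :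
    f = g :=
  funext fun j => (hf j).trans (hg j).symm

theorem mapsTo_init_factors (n : ℕ) :
    Set.MapsTo (Fin.init : (Fin (n + 1) → ℕ) → Fin n → ℕ) (factors w (n + 1)) (factors w n) :=
  fun _ ⟨i, hi⟩ => ⟨i, fun j => hi j.castSucc⟩

theorem rightSpecialFactors_subset_factors (n : ℕ) :
    rightSpecialFactors w n ⊆ factors w n :=
  fun _ ⟨i, _, hi, _⟩ => ⟨i, hi⟩

theorem factors_subset_piFinset (hw : ∀ i, w i ≤ 1) (n : ℕ) :
    factors w n ⊆ ↑(Fintype.piFinset fun _ : Fin n => Finset.range 2) := by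
  rintro f ⟨i, hi⟩
  simp only [Finset.mem_coe, Fintype.mem_piFinset, Finset.mem_range]
  exact fun j => (hi j).trans_lt (Nat.lt_succ_of_le (hw _))

theorem finite_factors (hw : ∀ i, w i ≤ 1) (n : ℕ) : (factors w n).Finite :=
  (Finset.finite_toSet _).subset (factors_subset_piFinset hw n)

theorem finite_rightSpecialFactors (hw : ∀ i, w i ≤ 1) (n : ℕ) :
    (rightSpecialFactors w n).Finite :=
  (finite_factors hw n).subset (rightSpecialFactors_subset_factors n)

theorem ncard_factors_le (hw : ∀ i, w i ≤ 1) (n : ℕ) : (factors w n).ncard ≤ 2 ^ n := by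
  calc (factors w n).ncard
      ≤ (↑(Fintype.piFinset fun _ : Fin n => Finset.range 2) : Set (Fin n → ℕ)).ncard :=
        Set.ncard_le_ncard (factors_subset_piFinset hw n) (Finset.finite_toSet _)
    _ = 2 ^ n := by rw [Set.ncard_coe_finset]; simp

/-- A factor of length `n` has at most two extensions, and it has two exactly when it is
right special. -/
theorem ncard_factors_succ_le (hw : ∀ i, w i ≤ 1) (n : ℕ) :
    (factors w (n + 1)).ncard ≤ (factors w n).ncard + (rightSpecialFactors w n).ncard := by
  let init : (Fin (n + 1) → ℕ) → Fin n → ℕ := Fin.init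
  let S : ℕ → Set (Fin (n + 1) → ℕ) := fun a => {x ∈ factors w (n + 1) | x (Fin.last n) = a}
  have hsplit : factors w (n + 1) = S 0 ∪ S 1 := by
    ext x
    refine ⟨fun hx => ?_, fun hx => hx.elim And.left And.left⟩
    obtain ⟨i, hi⟩ := hx
    have hlast := hi (Fin.last n) ▸ hw (i + n)
    rcases Nat.le_one_iff_eq_zero_or_eq_one.mp hlast with h | h
    exacts [Or.inl ⟨⟨i, hi⟩, h⟩, Or.inr ⟨⟨i, hi⟩, h⟩]
  have hinj (a : ℕ) : Set.InjOn init (S a) := fun x hx y hy hxy => by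
    rw [← Fin.snoc_init_self x, ← Fin.snoc_init_self y]
    simp only [init] at hxy
    rw [hxy, hx.2, hy.2]
  have himage (a : ℕ) : init '' S a ⊆ factors w n :=
    Set.image_subset_iff.mpr fun x hx => mapsTo_init_factors n hx.1
  have hinter : init '' S 0 ∩ init '' S 1 ⊆ rightSpecialFactors w n := by
    rintro _ ⟨⟨x, ⟨⟨i, hi⟩, hx⟩, rfl⟩, ⟨y, ⟨⟨i', hi'⟩, hy⟩, hxy⟩⟩
    refine ⟨i, i', fun j => hi j.castSucc, hxy ▸ fun j => hi' j.castSucc, ?_⟩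
    have h0 : w (i + n) = 0 := (hi (Fin.last n)).symm.trans hx
    have h1 : w (i' + n) = 1 := (hi' (Fin.last n)).symm.trans hy
    omega
  have hfin (a : ℕ) : (init '' S a).Finite :=
    ((finite_factors hw _).subset fun _ hx => hx.1).image _
  calc (factors w (n + 1)).ncard
      ≤ (S 0).ncard + (S 1).ncard := hsplit ▸ Set.ncard_union_le _ _
    _ = (init '' S 0).ncard + (init '' S 1).ncard := by
        rw [(hinj 0).ncard_image, (hinj 1).ncard_image]
    _ = (init '' S 0 ∪ init '' S 1).ncard + (init '' S 0 ∩ init '' S 1).ncard :=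
        (Set.ncard_union_add_ncard_inter _ _ (hfin 0) (hfin 1)).symm
    _ ≤ (factors w n).ncard + (rightSpecialFactors w n).ncard :=
        add_le_add
          (Set.ncard_le_ncard (Set.union_subset (himage 0) (himage 1)) (finite_factors hw n))
          (Set.ncard_le_ncard hinter (finite_rightSpecialFactors hw n))

end InfiniteWord

open InfiniteWord

theorem thueMorse_le_one (n : ℕ) : thueMorse n ≤ 1 :=
  Nat.le_of_lt_succ (Nat.mod_lt _ two_pos)

theorem thueMorse_eq_div_two (n : ℕ) : thueMorse n = (thueMorse (n / 2) + n) % 2 := by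
  rcases Nat.eq_zero_or_pos n with rfl | hn
  · rfl
  · unfold thueMorse
    rw [Nat.digits_def' one_lt_two hn, List.sum_cons]
    omega

theorem thueMorse_two_mul (n : ℕ) : thueMorse (2 * n) = thueMorse n := by
  rw [thueMorse_eq_div_two, Nat.mul_div_cancel_left n two_pos]
  have := thueMorse_le_one n
  omega

theorem thueMorse_two_mul_add_one (n : ℕ) : thueMorse (2 * n + 1) = 1 - thueMorse n := by
  rw [thueMorse_eq_div_two, show (2 * n + 1) / 2 = n by omega]
  have := thueMorse_le_one n
  omega

theorem thueMorse_not_three_eq (n : ℕ) :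
    ¬(thueMorse n = thueMorse (n + 1) ∧ thueMorse (n + 1) = thueMorse (n + 2)) := by
  rintro ⟨h₁, h₂⟩
  obtain ⟨k, rfl | rfl⟩ := Nat.even_or_odd' n
  · have := thueMorse_two_mul_add_one k
    rw [thueMorse_two_mul] at h₁
    have := thueMorse_le_one k
    omega
  · rw [show 2 * k + 1 + 1 = 2 * (k + 1) by ring, thueMorse_two_mul] at h₁ h₂
    rw [show 2 * k + 1 + 2 = 2 * (k + 1) + 1 by ring, thueMorse_two_mul_add_one] at h₂
    have := thueMorse_le_one (k + 1)
    omega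

theorem mod_two_eq_of_thueMorse_eq {i j : ℕ}
    (h : ∀ l < 4, thueMorse (i + l) = thueMorse (j + l)) : i % 2 = j % 2 := by
  wlog hij : i % 2 = 0 ∧ j % 2 = 1 generalizing i j
  · by_contra hne
    exact hne (this (fun l hl => (h l hl).symm) (by omega)).symm
  obtain ⟨a, rfl⟩ : ∃ a, i = 2 * a := ⟨i / 2, by omega⟩
  obtain ⟨b, rfl⟩ : ∃ b, j = 2 * b + 1 := ⟨j / 2, by omega⟩
  have h₀ := h 0 (by norm_num)
  have h₁ := h 1 (by norm_num)
  have h₂ := h 2 (by norm_num)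
  have h₃ := h 3 (by norm_num)
  rw [show 2 * a + 0 = 2 * a by ring, thueMorse_two_mul, show 2 * b + 1 + 0 = 2 * b + 1 by ring,
    thueMorse_two_mul_add_one] at h₀
  rw [thueMorse_two_mul_add_one, show 2 * b + 1 + 1 = 2 * (b + 1) by ring,
    thueMorse_two_mul] at h₁
  rw [show 2 * a + 2 = 2 * (a + 1) by ring, thueMorse_two_mul,
    show 2 * b + 1 + 2 = 2 * (b + 1) + 1 by ring, thueMorse_two_mul_add_one] at h₂
  rw [show 2 * a + 3 = 2 * (a + 1) + 1 by ring, thueMorse_two_mul_add_one,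
    show 2 * b + 1 + 3 = 2 * (b + 2) by ring, thueMorse_two_mul] at h₃
  have := thueMorse_le_one a
  have := thueMorse_le_one (a + 1)
  have := thueMorse_le_one b
  exact (thueMorse_not_three_eq b ⟨by omega, by omega⟩).elim

/-- If the letter after an occurrence of a factor `f` sits at an odd position, it is determined
by the last letter of `f`. -/
theorem add_mod_two_eq_zero_of_occursAt_thueMorse {n i i' : ℕ} {f : Fin n → ℕ} (hn : 4 ≤ n)
    (hi : OccursAt thueMorse f i) (hi' : OccursAt thueMorse f i')
    (hne : thueMorse (i + n) ≠ thueMorse (i' + n)) : (i + n) % 2 = 0 := by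
  have hpar : i % 2 = i' % 2 :=
    mod_two_eq_of_thueMorse_eq fun l hl => (hi ⟨l, by omega⟩).symm.trans (hi' ⟨l, by omega⟩)
  have hlast : thueMorse (i + (n - 1)) = thueMorse (i' + (n - 1)) :=
    (hi ⟨n - 1, by omega⟩).symm.trans (hi' ⟨n - 1, by omega⟩)
  by_contra hodd
  obtain ⟨a, ha⟩ : ∃ a, i + n = 2 * a + 1 := ⟨(i + n) / 2, by omega⟩
  obtain ⟨a', ha'⟩ : ∃ a', i' + n = 2 * a' + 1 := ⟨(i' + n) / 2, by omega⟩
  rw [ha, ha', thueMorse_two_mul_add_one, thueMorse_two_mul_add_one] at hne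
  rw [show i + (n - 1) = 2 * a by omega, show i' + (n - 1) = 2 * a' by omega,
    thueMorse_two_mul, thueMorse_two_mul] at hlast
  exact hne (by rw [hlast])

/-- The suffix of length `n` of the image of `u` under the Thue–Morse morphism
`0 ↦ 01, 1 ↦ 10`. -/
def morphismSuffix (n : ℕ) (u : Fin ((n + 1) / 2) → ℕ) : Fin n → ℕ :=
  fun j => (u ⟨(j + n % 2) / 2, by omega⟩ + j + n % 2) % 2

theorem InfiniteWord.OccursAt.morphismSuffix {n c : ℕ} {u : Fin ((n + 1) / 2) → ℕ}
    (hu : OccursAt thueMorse u c) :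
    OccursAt thueMorse (morphismSuffix n u) (2 * c + n % 2) := by
  intro j
  rw [thueMorse_eq_div_two (2 * c + n % 2 + j), show (2 * c + n % 2 + j) / 2 = c + (j + n % 2) / 2
    by omega, ← hu ⟨(j + n % 2) / 2, by omega⟩, _root_.morphismSuffix]
  omega

theorem InfiniteWord.OccursAt.thueMorse_preimage {n k : ℕ} {f : Fin n → ℕ} (hf : OccursAt thueMorse f k)
    (hk : (k + n) % 2 = 0) :
    OccursAt thueMorse (fun l : Fin ((n + 1) / 2) => 1 - f ⟨2 * l + 1 - n % 2, by omega⟩)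
      ((k + n) / 2 - (n + 1) / 2) := by
  intro l
  show 1 - f _ = _
  rw [hf, show k + (2 * l + 1 - n % 2) = 2 * ((k + n) / 2 - (n + 1) / 2 + l) + 1 by omega,
    thueMorse_two_mul_add_one]
  have := thueMorse_le_one ((k + n) / 2 - (n + 1) / 2 + l)
  omega

theorem rightSpecialFactors_thueMorse_subset_image {n : ℕ} (hn : 4 ≤ n) :
    rightSpecialFactors thueMorse n ⊆
      morphismSuffix n '' rightSpecialFactors thueMorse ((n + 1) / 2) := by
  rintro f ⟨i, i', hi, hi', hne⟩
  have he := add_mod_two_eq_zero_of_occursAt_thueMorse hn hi hi' hne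
  have he' := add_mod_two_eq_zero_of_occursAt_thueMorse hn hi' hi hne.symm
  have hnext (k : ℕ) (hk : (k + n) % 2 = 0) :
      thueMorse ((k + n) / 2 - (n + 1) / 2 + (n + 1) / 2) = thueMorse (k + n) := by
    rw [show (k + n) / 2 - (n + 1) / 2 + (n + 1) / 2 = (k + n) / 2 by omega, ← thueMorse_two_mul,
      Nat.mul_div_cancel' (Nat.dvd_of_mod_eq_zero hk)]
  have hu := hi.thueMorse_preimage he
  refine ⟨_, ⟨_, _, hu, hi'.thueMorse_preimage he', ?_⟩, ?_⟩
  · rwa [hnext i he, hnext i' he']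
  · have hσ := hu.morphismSuffix
    rw [show 2 * ((i + n) / 2 - (n + 1) / 2) + n % 2 = i by omega] at hσ
    exact hσ.eq hi

theorem last_ne_of_mem_rightSpecialFactors_thueMorse {n : ℕ} {f : Fin (n + 2) → ℕ}
    (hf : f ∈ rightSpecialFactors thueMorse (n + 2)) :
    f (Fin.last (n + 1)) ≠ f (Fin.last n).castSucc := by
  obtain ⟨i, i', hi, hi', hne⟩ := hf
  intro heq
  have h₁ := hi (Fin.last (n + 1))
  have h₂ := hi (Fin.last n).castSucc
  have h₁' := hi' (Fin.last (n + 1))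
  have h₂' := hi' (Fin.last n).castSucc
  simp only [Fin.val_last, Fin.val_castSucc] at h₁ h₂ h₁' h₂'
  have h₃ := thueMorse_not_three_eq (i + n)
  have h₃' := thueMorse_not_three_eq (i' + n)
  simp only [add_assoc] at h₃ h₃'
  have := thueMorse_le_one (i + n)
  have := thueMorse_le_one (i + (n + 2))
  have := thueMorse_le_one (i' + (n + 2))
  omega

theorem ncard_rightSpecialFactors_thueMorse_add_two_le (n : ℕ) :
    (rightSpecialFactors thueMorse (n + 2)).ncard ≤ (factors thueMorse (n + 1)).ncard := by
  refine Set.ncard_le_ncard_of_injOn Fin.init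
    (fun f hf => mapsTo_init_factors _ (rightSpecialFactors_subset_factors _ hf))
    (fun f hf g hg hfg => ?_) (finite_factors thueMorse_le_one _)
  have hf₂ := last_ne_of_mem_rightSpecialFactors_thueMorse hf
  have hg₂ := last_ne_of_mem_rightSpecialFactors_thueMorse hg
  have hlast : f (Fin.last n).castSucc = g (Fin.last n).castSucc := congrFun hfg (Fin.last n)
  obtain ⟨i, hi⟩ := rightSpecialFactors_subset_factors _ hf
  obtain ⟨j, hj⟩ := rightSpecialFactors_subset_factors _ hg
  have hf_le := hi (Fin.last (n + 1)) ▸ thueMorse_le_one _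
  have hg_le := hj (Fin.last (n + 1)) ▸ thueMorse_le_one _
  have hlast_le := hi (Fin.last n).castSucc ▸ thueMorse_le_one _
  rw [← Fin.snoc_init_self f, ← Fin.snoc_init_self g, hfg]
  congr 1
  omega

theorem ncard_rightSpecialFactors_thueMorse_le_four (n : ℕ) :
    (rightSpecialFactors thueMorse n).ncard ≤ 4 := by
  induction n using Nat.strong_induction_on with
  | _ n ih =>
    rcases (by omega : n ≤ 2 ∨ n = 3 ∨ 4 ≤ n) with hn | rfl | hn
    · calc (rightSpecialFactors thueMorse n).ncard
          ≤ (factors thueMorse n).ncard :=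
            Set.ncard_le_ncard (rightSpecialFactors_subset_factors n)
              (finite_factors thueMorse_le_one n)
        _ ≤ 2 ^ n := ncard_factors_le thueMorse_le_one n
        _ ≤ 2 ^ 2 := Nat.pow_le_pow_right two_pos hn
    · exact (ncard_rightSpecialFactors_thueMorse_add_two_le 1).trans
        (ncard_factors_le thueMorse_le_one 2)
    · calc (rightSpecialFactors thueMorse n).ncard
          ≤ (morphismSuffix n '' rightSpecialFactors thueMorse ((n + 1) / 2)).ncard :=
            Set.ncard_le_ncard (rightSpecialFactors_thueMorse_subset_image hn)
              ((finite_rightSpecialFactors thueMorse_le_one _).image _)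
        _ ≤ (rightSpecialFactors thueMorse ((n + 1) / 2)).ncard :=
            Set.ncard_image_le (finite_rightSpecialFactors thueMorse_le_one _)
        _ ≤ 4 := ih _ (by omega)

theorem thueMorse_complexity_first_difference_le_four_general (n : ℕ) :
    (complexity thueMorse (n + 1) : ℤ) - complexity thueMorse n ≤ 4 := by
  have := ncard_factors_succ_le thueMorse_le_one n
  have := ncard_rightSpecialFactors_thueMorse_le_four n
  rw [complexity_eq_ncard_factors, complexity_eq_ncard_factors]
  omega

/-- For all `n ≥ 1`, the subword complexity of the Thue–Morse word satisfies
`p_t(n+1) − p_t(n) ≤ 4`. -/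
theorem thueMorse_complexity_first_difference_le_four (n : ℕ) (hn : 1 ≤ n) :
    (complexity thueMorse (n + 1) : ℤ) - complexity thueMorse n ≤ 4 :=
  thueMorse_complexity_first_difference_le_four_general n
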